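/- Let L, s, k and i be positive integers with L ≥ 3, k ≥ s+1 and s ≤ i ≤ L+s. Then every coefficient of the formal power series H_{L,s,k+i}(q) − H_{L,s,k}(q) is nonnegative. -/

import Mathlib

open PowerSeries in
/-- The formal power series
`H_{L,s,k}(q) = q^s(1−q^k)/∏_{j=0}^{L}(1−q^{s+j}) − (1/∏_{j=1}^{L}(1−q^{s+j}) − 1)`
over `ℤ`.  Each factor `1 − q^m` with `m ≥ 1` has constant coefficient `1`, so its
inverse is given by `PowerSeries.invOfUnit _ 1`. -/
noncomputable def Hser (L s k : ℕ) : PowerSeries ℤ :=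
  (X : PowerSeries ℤ) ^ s * (1 - (X : PowerSeries ℤ) ^ k) *
      invOfUnit (∏ j ∈ Finset.range (L + 1), (1 - (X : PowerSeries ℤ) ^ (s + j))) 1
    - (invOfUnit (∏ j ∈ Finset.range L, (1 - (X : PowerSeries ℤ) ^ (s + 1 + j))) 1 - 1)

/-!
The second summand of `H_{L,s,k}` does not depend on `k`, so
`H_{L,s,k+i} − H_{L,s,k} = q^{s+k}(1 − q^i)/∏_{j=0}^{L}(1 − q^{s+j})`.
For `s ≤ i ≤ L + s` the factor `1 − q^i` cancels against the denominator, leaving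
`q^{s+k}` times a product of geometric series `1/(1 − q^m) = ∑ₙ q^{mn}`, all of whose
coefficients are nonnegative.
-/

open PowerSeries Finset

section Nonneg

variable {R : Type*} [CommSemiring R] [PartialOrder R] [IsOrderedRing R]

theorem PowerSeries.coeff_mul_nonneg {f g : R⟦X⟧} (hf : ∀ n, 0 ≤ coeff n f)
    (hg : ∀ n, 0 ≤ coeff n g) (n : ℕ) : 0 ≤ coeff n (f * g) := by
  rw [coeff_mul]
  exact sum_nonneg fun p _ => mul_nonneg (hf _) (hg _)

theorem PowerSeries.coeff_prod_nonneg {ι : Type*} (t : Finset ι) (f : ι → R⟦X⟧)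
    (hf : ∀ j ∈ t, ∀ n, 0 ≤ coeff n (f j)) (n : ℕ) : 0 ≤ coeff n (∏ j ∈ t, f j) := by
  refine prod_induction _ (fun g => ∀ n, 0 ≤ coeff n g) (fun _ _ => coeff_mul_nonneg) ?_ hf n
  intro n
  rw [coeff_one]
  split_ifs <;> simp

end Nonneg

theorem PowerSeries.coeff_X_pow_mul_nonneg {R : Type*} [Semiring R] [Preorder R] {f : R⟦X⟧}
    (hf : ∀ n, 0 ≤ coeff n f) (d n : ℕ) : 0 ≤ coeff n (X ^ d * f) := by
  rw [coeff_X_pow_mul']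
  split_ifs
  exacts [hf _, le_rfl]

noncomputable def geomSeries (R : Type*) [Semiring R] (m : ℕ) : R⟦X⟧ :=
  mk fun n => if m ∣ n then 1 else 0

theorem coeff_geomSeries_nonneg {R : Type*} [Semiring R] [PartialOrder R]
    [IsOrderedRing R] (m n : ℕ) : 0 ≤ coeff n (geomSeries R m) := by
  rw [geomSeries, coeff_mk]
  split_ifs <;> simp

theorem one_sub_X_pow_mul_geomSeries {R : Type*} [Ring R] {m : ℕ} (hm : 0 < m) :
    (1 - X ^ m) * geomSeries R m = 1 := by
  ext n
  rw [sub_mul, one_mul, map_sub, coeff_X_pow_mul', coeff_one, geomSeries, coeff_mk, coeff_mk]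
  rcases Nat.eq_zero_or_pos n with rfl | hn
  · simp [hm.ne']
  rw [if_neg hn.ne']
  split_ifs with hdvd hle hsub hle hsub <;> try simp
  · exact absurd (Nat.dvd_sub hdvd dvd_rfl) hsub
  · exact absurd (Nat.le_of_dvd hn hdvd) hle
  · exact absurd (by simpa [Nat.sub_add_cancel hle] using Nat.dvd_add hsub (dvd_refl m)) hdvd

theorem invOfUnit_prod_one_sub_X_pow {R : Type*} [CommRing R] {ι : Type*} (t : Finset ι)
    (e : ι → ℕ) (he : ∀ j ∈ t, 0 < e j) :
    invOfUnit (∏ j ∈ t, (1 - X ^ e j)) 1 = ∏ j ∈ t, geomSeries R (e j) := by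
  refine left_inv_eq_right_inv (invOfUnit_mul _ 1 ?_) ?_
  · rw [map_prod, Units.val_one]
    exact prod_eq_one fun j hj => by simp [zero_pow (he j hj).ne']
  · rw [← prod_mul_distrib]
    exact prod_eq_one fun j hj => one_sub_X_pow_mul_geomSeries (he j hj)

theorem Hser_add_sub_Hser (L s k i : ℕ) :
    Hser L s (k + i) - Hser L s k =
      X ^ (s + k) * ((1 - X ^ i) *
        invOfUnit (∏ j ∈ range (L + 1), (1 - (X : ℤ⟦X⟧) ^ (s + j))) 1) := by
  simp only [Hser]
  ring

theorem stmt_10_general (L s k i : ℕ) (hs : 0 < s)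
    (hi1 : s ≤ i) (hi2 : i ≤ L + s) :
    ∀ N : ℕ, 0 ≤ PowerSeries.coeff N (Hser L s (k + i) - Hser L s k) := by
  obtain ⟨j₀, rfl⟩ : ∃ j₀, i = s + j₀ := ⟨i - s, by omega⟩
  have hj₀ : j₀ ∈ range (L + 1) := mem_range.2 (by omega)
  have hcancel : (1 - X ^ (s + j₀)) *
      invOfUnit (∏ j ∈ range (L + 1), (1 - (X : ℤ⟦X⟧) ^ (s + j))) 1 =
        ∏ j ∈ (range (L + 1)).erase j₀, geomSeries ℤ (s + j) := by
    rw [invOfUnit_prod_one_sub_X_pow _ _ fun j _ => by omega, ← mul_prod_erase _ _ hj₀,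
      ← mul_assoc, one_sub_X_pow_mul_geomSeries (by omega), one_mul]
  rw [Hser_add_sub_Hser, hcancel]
  exact coeff_X_pow_mul_nonneg
    (coeff_prod_nonneg _ _ fun j _ => coeff_geomSeries_nonneg (s + j)) _

theorem stmt_10 (L s k i : ℕ) (hs : 0 < s) (hL : 3 ≤ L) (hk : s + 1 ≤ k)
    (hi1 : s ≤ i) (hi2 : i ≤ L + s) :
    ∀ N : ℕ, 0 ≤ PowerSeries.coeff N (Hser L s (k + i) - Hser L s k) :=
  stmt_10_general L s k i hs hi1 hi2
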